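/- arXiv:1704.00964 — 5 statements merged into one kernel-verified Lean document; each statement's English description precedes it below -/
import Mathlib

section
/- If G is a tree on an odd number n ≥ 3 of vertices, then the Wiener index W(G) = Σ_{u,v ∈ V(G)} d(u,v) (sum over unordered pairs) is an even number. -/
/-- The Wiener index: sum of distances over unordered pairs of vertices. -/
noncomputable def wiener {V : Type*} [Fintype V] (G : SimpleGraph V) : ℕ :=
  (∑ u : V, ∑ v : V, G.dist u v) / 2

/-- Vertex set for a caterpillar with spine `u_{-d}, …, u_d` and `L i` leaves at `u_i`.
`(0, i)` is the spine vertex `u_i`; `(j, i)` for `1 ≤ j ≤ L i` is the `j`-th leaf at `u_i`. -/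
noncomputable def catVerts (d : ℤ) (L : ℤ → ℕ) : Finset (ℤ × ℤ) :=
  (Finset.Icc (-d) d).biUnion (fun i => (Finset.Icc (0:ℤ) (L i : ℤ)).image (fun j => (j, i)))

/-- The caterpillar graph with spine `u_{-d}, …, u_d` and `L i` leaves appended to `u_i`. -/
def caterpillar (d : ℤ) (L : ℤ → ℕ) : SimpleGraph ↥(catVerts d L) :=
  SimpleGraph.fromRel (fun a b =>
    (a.1.1 = 0 ∧ b.1.1 = 0 ∧ a.1.2 + 1 = b.1.2) ∨
    (a.1.2 = b.1.2 ∧ a.1.1 = 0 ∧ b.1.1 ≠ 0))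

/-- Leaf-count function of the caterpillar `B₁(n,d,x)`. -/
def B1L (n d x : ℤ) : ℤ → ℕ := fun i =>
  (if i = -d - 1 + x ∨ i = d + 1 - x then 1 else 0) +
  (if |i| ≤ (n - 2*d - 4)/2 then 1 else 0)

/-- The caterpillar `B₁(n,d,x)`. -/
noncomputable def B1 (n d x : ℤ) := caterpillar d (B1L n d x)

/-- Leaf-count function of the caterpillar `B₂(n,d,x)`. -/
def B2L (n d x : ℤ) : ℤ → ℕ := fun i =>
  (if |i| ≤ d - 2 then 1 else 0) +
  (if |i| = d - 1 then x.toNat else 0) +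
  (if |i| = d then ((n - 4*d - 2*x + 2)/2).toNat else 0)

/-- The caterpillar `B₂(n,d,x)`. -/
noncomputable def B2 (n d x : ℤ) := caterpillar d (B2L n d x)

/-- `G₁(n,d,x,s)`: `B₁(n−2,d,x)` with an extra leaf at `u_s` and at `u_d`. -/
noncomputable def G1 (n d x s : ℤ) :=
  caterpillar d (fun i => B1L (n-2) d x i + (if i = s then 1 else 0) + (if i = d then 1 else 0))

/-- `G₂(n,d,x,s)`: `B₂(n−2,d,x)` with an extra leaf at `u_s` and at `u_d`. -/
noncomputable def G2 (n d x s : ℤ) :=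
  caterpillar d (fun i => B2L (n-2) d x i + (if i = s then 1 else 0) + (if i = d then 1 else 0))

/-- `G₃(n,d,x,s)`: `B₁(n−1,d,x)` with an extra leaf at `u_s`. -/
noncomputable def G3 (n d x s : ℤ) :=
  caterpillar d (fun i => B1L (n-1) d x i + (if i = s then 1 else 0))

/-- `G₄(n,d,x,s)`: `B₂(n−1,d,x)` with an extra leaf at `u_s`. -/
noncomputable def G4 (n d x s : ℤ) :=
  caterpillar d (fun i => B2L (n-1) d x i + (if i = s then 1 else 0))

/-- The star on `n` vertices: vertex `0` adjacent to all others. -/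
def starGraph (n : ℕ) : SimpleGraph (Fin n) :=
  SimpleGraph.fromRel (fun a _ => a.val = 0)

/-!
Two-colour the tree by `c : V → ZMod 2`; then `d(u,v) ≡ c u + c v (mod 2)`. Lifting `c` to `F : V → ℕ`,
the matrix `m u v = (d(u,v) + F u + F v) / 2` is symmetric with diagonal `F`, and summing
`d = 2m - F u - F v` gives `W + n ∑ F = ∑∑ m`. Modulo 2 the off-diagonal entries of the symmetric
matrix `m` cancel in pairs, so `W ≡ (1 - n) ∑ F`, which vanishes for odd `n`.
-/

open Finset

namespace SimpleGraph

variable {V : Type*} {G : SimpleGraph V}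

theorem Coloring.length_cast_zmodTwo (c : G.Coloring (ZMod 2)) {u v : V} (p : G.Walk u v) :
    (p.length : ZMod 2) = c u + c v := by
  induction p with
  | nil => simp [CharTwo.add_self_eq_zero]
  | @cons u w v hadj p ih =>
    have hne_eq : ∀ a b : ZMod 2, a ≠ b → a = b + 1 := by decide
    rw [Walk.length_cons, Nat.cast_succ, ih, hne_eq _ _ (c.valid hadj)]
    ring

theorem Coloring.dist_cast_zmodTwo (c : G.Coloring (ZMod 2)) {u v : V} (h : G.Reachable u v) :
    (G.dist u v : ZMod 2) = c u + c v := by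
  obtain ⟨p, hp⟩ := h.exists_walk_length_eq_dist
  rw [← hp, c.length_cast_zmodTwo]

end SimpleGraph

theorem Finset.sum_sum_eq_sum_diag_of_symm {ι R : Type*} [Semiring R] [CharP R 2] (s : Finset ι)
    (k : ι → ι → R) (hk : ∀ i j, k i j = k j i) :
    ∑ i ∈ s, ∑ j ∈ s, k i j = ∑ i ∈ s, k i i := by
  classical
  induction s using Finset.induction_on with
  | empty => simp
  | insert a s ha ih =>
    simp only [sum_insert ha, sum_add_distrib, ih]
    rw [sum_congr rfl fun i _ => hk i a]
    rw [add_assoc, ← add_assoc (∑ j ∈ s, k a j), CharTwo.add_self_eq_zero, zero_add]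

theorem even_sum_sum_div_two_of_odd_card {ι : Type*} [Fintype ι] (hι : Odd (Fintype.card ι))
    (d : ι → ι → ℕ) (f : ι → ZMod 2) (hsymm : ∀ i j, d i j = d j i) (hdiag : ∀ i, d i i = 0)
    (hpar : ∀ i j, (d i j : ZMod 2) = f i + f j) :
    Even ((∑ i, ∑ j, d i j) / 2) := by
  set F : ι → ℕ := fun i => (f i).val
  set m : ι → ι → ℕ := fun i j => (d i j + F i + F j) / 2
  have hm (i j : ι) : d i j + F i + F j = 2 * m i j := by
    refine (Nat.two_mul_div_two_of_even ?_).symm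
    rw [← ZMod.natCast_eq_zero_iff_even]
    push_cast [hpar, F, ZMod.natCast_zmod_val]
    linear_combination CharTwo.add_self_eq_zero (f i + f j)
  have hm_symm (i j : ι) : m i j = m j i := by
    simp only [m, hsymm i j, add_right_comm]
  have hm_diag (i : ι) : m i i = F i := by
    have := hm i i
    rw [hdiag] at this
    omega
  have hsum : ∑ i, ∑ j, d i j + 2 * (Fintype.card ι * ∑ i, F i) = 2 * ∑ i, ∑ j, m i j := by
    simp only [mul_sum, ← hm, sum_add_distrib, sum_const, card_univ, smul_eq_mul]
    simp only [← mul_sum]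
    ring
  have hdiv : (∑ i, ∑ j, d i j) / 2 + Fintype.card ι * ∑ i, F i = ∑ i, ∑ j, m i j := by
    omega
  have key := congrArg (Nat.cast : ℕ → ZMod 2) hdiv
  push_cast at key
  rw [sum_sum_eq_sum_diag_of_symm _ (fun i j => (m i j : ZMod 2)) fun i j => by rw [hm_symm]] at key
  simp only [hm_diag, F, ZMod.natCast_zmod_val, (ZMod.natCast_eq_one_iff_odd).mpr hι, one_mul,
    add_eq_right] at key
  exact (ZMod.natCast_eq_zero_iff_even).mp key

theorem wiener_even_of_odd_card_general {V : Type*} [Fintype V] (G : SimpleGraph V)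
    (hT : G.IsTree) (hodd : Odd (Fintype.card V)) :
    Even (wiener G) := by
  -- a colouring by `Fin 2` is one by `ZMod 2`, definitionally
  obtain ⟨c⟩ := hT.isBipartite
  exact even_sum_sum_div_two_of_odd_card hodd _ c (fun _ _ => G.dist_comm) (fun _ => G.dist_self)
    fun u v => c.dist_cast_zmodTwo (hT.connected u v)

/-- A tree on an odd number `n ≥ 3` of vertices has even Wiener index. -/
theorem wiener_even_of_odd_card {V : Type*} [Fintype V] (G : SimpleGraph V)
    (hT : G.IsTree) (hodd : Odd (Fintype.card V)) (hn : 3 ≤ Fintype.card V) :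
    Even (wiener G) :=
  wiener_even_of_odd_card_general G hT hodd
end

section
/- Let G be a tree containing a vertex u of degree 4 whose neighbors include two leaves v₁, v₂ and two non-leaf vertices w₁, w₂. Let G′ be the tree obtained from G by deleting the edges uv₁ and uv₂ and adding the edges w₁v₁ and w₂v₂. Then W(G′) = W(G) + 4. -/
/-!
Both `G` and the transformed tree `G'` are one and the same tree on `V \ {v₁, v₂}` with the two
leaves `v₁, v₂` attached, both at `u` in `G`, at `w₁` and `w₂` respectively in `G'`. Shortest
paths never pass through a leaf, so distances inside `V \ {v₁, v₂}` agree, and a leaf is one step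
further from everything than its neighbour. Hence the change of the distance sum is governed by
`∑ x ∉ {v₁, v₂}, (d(x, w₁) + d(x, w₂) - 2 d(x, u))` together with `d(v₁, v₂)`, which grows
from `2` to `4`. For `x ≠ u` exactly one neighbour of `u` in the tree is closer to `x` than `u`;
it is not a leaf, so it is `w₁` or `w₂`, and the summand vanishes; for `x = u` it is `2`.
-/

open Finset

namespace SimpleGraph

variable {V : Type*} {G : SimpleGraph V}

lemma neighborSet_eq_of_subset_of_degree_le {v : V} [Fintype (G.neighborSet v)] {s : Finset V}
    (hs : ∀ w ∈ s, G.Adj v w) (hd : G.degree v ≤ s.card) : G.neighborSet v = s := by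
  rw [← coe_neighborFinset,
    Finset.eq_of_subset_of_card_le (fun w hw => (mem_neighborFinset G v w).mpr (hs w hw)) hd]

lemma Reachable.exists_adj_dist_add_one_eq {x u : V} (h : G.Reachable x u) (hxu : x ≠ u) :
    ∃ w, G.Adj u w ∧ G.dist x w + 1 = G.dist x u := by
  obtain ⟨p, hp⟩ := h.exists_walk_length_eq_dist
  have hnil : ¬p.Nil := Walk.not_nil_of_ne hxu
  have hadj := p.adj_penultimate hnil
  refine ⟨p.penultimate, hadj.symm, le_antisymm ?_ ?_⟩
  · have := G.dist_le p.dropLast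
    have := p.length_dropLast_add_one hnil
    omega
  · calc G.dist x u ≤ G.dist x p.penultimate + G.dist p.penultimate u :=
          (h.trans hadj.reachable.symm).dist_triangle_left _
      _ = G.dist x p.penultimate + 1 := by rw [dist_eq_one_iff_adj.mpr hadj]

lemma Reachable.dist_eq_dist_add_one_of_neighborSet_eq {x v w : V} (h : G.Reachable x v)
    (hv : G.neighborSet v = {w}) (hxv : x ≠ v) : G.dist x v = G.dist x w + 1 := by
  obtain ⟨w', hw', hd⟩ := h.exists_adj_dist_add_one_eq hxv
  have : w' = w := by simpa [← mem_neighborSet, hv] using hw'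
  exact this ▸ hd.symm

lemma IsAcyclic.eq_of_dist_add_one_eq {x u w w' : V} (hG : G.IsAcyclic)
    (hw : G.Adj w u) (hw' : G.Adj w' u)
    (hd : G.dist x w + 1 = G.dist x u) (hd' : G.dist x w' + 1 = G.dist x u) : w = w' := by
  have hreach : G.Reachable x u := Reachable.of_dist_ne_zero (by omega)
  obtain ⟨p, -, hp⟩ := (hreach.trans hw.reachable.symm).exists_path_of_dist
  obtain ⟨p', -, hp'⟩ := (hreach.trans hw'.reachable.symm).exists_path_of_dist
  have hpath : (p.concat hw).IsPath := (p.concat hw).isPath_of_length_eq_dist (by simp; omega)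
  have hpath' : (p'.concat hw').IsPath := (p'.concat hw').isPath_of_length_eq_dist (by simp; omega)
  have := (hG.subsingleton_path x u).elim ⟨_, hpath⟩ ⟨_, hpath'⟩
  exact (Walk.concat_inj (Subtype.mk.inj this)).1

lemma IsTree.dist_add_dist_eq_two_mul {x u w₁ w₂ : V} (hG : G.IsTree)
    (hw₁ : G.Adj w₁ u) (hw₂ : G.Adj w₂ u) (hw : w₁ ≠ w₂)
    (hx : G.dist x w₁ < G.dist x u ∨ G.dist x w₂ < G.dist x u) :
    G.dist x w₁ + G.dist x w₂ = 2 * G.dist x u := by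
  have h₁ := hG.dist_eq_dist_add_one_of_adj x hw₁
  have h₂ := hG.dist_eq_dist_add_one_of_adj x hw₂
  have : ¬(G.dist x u = G.dist x w₁ + 1 ∧ G.dist x u = G.dist x w₂ + 1) := fun h =>
    hw (hG.isAcyclic.eq_of_dist_add_one_eq hw₁ hw₂ h.1.symm h.2.symm)
  omega

lemma Walk.IsPath.notMem_support_of_subsingleton {x y v : V} {p : G.Walk x y} (hp : p.IsPath)
    (hv : (G.neighborSet v).Subsingleton) (hxv : x ≠ v) (hyv : y ≠ v) : v ∉ p.support := by
  intro hmem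
  obtain ⟨q, r, rfl⟩ := (p.mem_support_iff_exists_append).mp hmem
  have hq : ¬q.Nil := Walk.not_nil_of_ne hxv
  have hr : ¬r.Nil := Walk.not_nil_of_ne hyv.symm
  exact hp.ne_of_mem_support_of_append (r.adj_snd hr).ne.symm
    (q.getVert_mem_support (q.length - 1)) (r.getVert_mem_support 1)
    (hv (q.adj_penultimate hq).symm (r.adj_snd hr))

lemma Reachable.exists_walk_length_eq_dist_of_adj_imp {H : SimpleGraph V} {s : Set V}
    (hs : ∀ v ∈ s, (G.neighborSet v).Subsingleton)
    (hGH : ∀ a b, a ∉ s → b ∉ s → G.Adj a b → H.Adj a b)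
    {x y : V} (hxy : G.Reachable x y) (hx : x ∉ s) (hy : y ∉ s) :
    ∃ q : H.Walk x y, q.length = G.dist x y := by
  obtain ⟨p, hp, hlen⟩ := hxy.exists_path_of_dist
  have hsupp : ∀ v ∈ p.support, v ∉ s := fun v hv hvs =>
    hp.notMem_support_of_subsingleton (hs v hvs) (fun h => hx (h ▸ hvs))
      (fun h => hy (h ▸ hvs)) hv
  refine ⟨p.transfer H fun e he => ?_, by rw [Walk.length_transfer, hlen]⟩
  induction e with
  | h a b =>
    exact hGH a b (hsupp a (p.fst_mem_support_of_mem_edges he))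
      (hsupp b (p.snd_mem_support_of_mem_edges he)) (p.adj_of_mem_edges he)

lemma Reachable.dist_eq_of_adj_iff {H : SimpleGraph V} {s : Set V}
    (hsG : ∀ v ∈ s, (G.neighborSet v).Subsingleton) (hsH : ∀ v ∈ s, (H.neighborSet v).Subsingleton)
    (hGH : ∀ a b, a ∉ s → b ∉ s → (G.Adj a b ↔ H.Adj a b))
    {x y : V} (hxy : G.Reachable x y) (hx : x ∉ s) (hy : y ∉ s) : H.dist x y = G.dist x y := by
  obtain ⟨q, hq⟩ := hxy.exists_walk_length_eq_dist_of_adj_imp hsG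
    (fun a b ha hb => (hGH a b ha hb).mp) hx hy
  obtain ⟨p, hp⟩ := q.reachable.exists_walk_length_eq_dist_of_adj_imp hsH
    (fun a b ha hb => (hGH a b ha hb).mpr) hx hy
  exact le_antisymm (hq ▸ dist_le q) (hp ▸ dist_le p)

section sums

variable [DecidableEq V]

lemma sum_sum_dist_insert {s : Finset V} {v a : V} (hv : v ∉ s)
    (hd : ∀ x ∈ s, G.dist x v = G.dist x a + 1) :
    ∑ x ∈ insert v s, ∑ y ∈ insert v s, G.dist x y
      = ∑ x ∈ s, ∑ y ∈ s, G.dist x y + 2 * ∑ x ∈ s, (G.dist x a + 1) := by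
  have hcol : ∑ x ∈ s, G.dist x v = ∑ x ∈ s, (G.dist x a + 1) := sum_congr rfl hd
  simp only [sum_insert hv, dist_self, sum_add_distrib, dist_comm (u := v), hcol]
  ring

lemma Connected.sum_sum_dist_eq_of_two_leaves [Fintype V] (hG : G.Connected) {v₁ v₂ a₁ a₂ : V}
    (hv₁ : G.neighborSet v₁ = {a₁}) (hv₂ : G.neighborSet v₂ = {a₂}) (hv : v₁ ≠ v₂)
    (ha₁ : a₁ ≠ v₂) :
    ∑ x, ∑ y, G.dist x y
      = ∑ x ∈ {v₁, v₂}ᶜ, ∑ y ∈ {v₁, v₂}ᶜ, G.dist x y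
        + 2 * ∑ x ∈ {v₁, v₂}ᶜ, (G.dist x a₁ + G.dist x a₂) + 4 * #{v₁, v₂}ᶜ
        + 2 * G.dist a₁ a₂ + 4 := by
  set T : Finset V := {v₁, v₂}ᶜ
  have hleaf₁ (x) (hx : x ≠ v₁) : G.dist x v₁ = G.dist x a₁ + 1 :=
    (hG x v₁).dist_eq_dist_add_one_of_neighborSet_eq hv₁ hx
  have hleaf₂ (x) (hx : x ≠ v₂) : G.dist x v₂ = G.dist x a₂ + 1 :=
    (hG x v₂).dist_eq_dist_add_one_of_neighborSet_eq hv₂ hx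
  have huniv : (univ : Finset V) = insert v₁ (insert v₂ T) := by ext; simp [T]; tauto
  have hv₁T : v₁ ∉ insert v₂ T := by simp [T, hv]
  have hv₂T : v₂ ∉ T := by simp [T]
  rw [huniv, sum_sum_dist_insert hv₁T (fun x hx => hleaf₁ x (fun h => hv₁T (h ▸ hx))),
    sum_sum_dist_insert hv₂T (fun x hx => hleaf₂ x (fun h => hv₂T (h ▸ hx))),
    sum_insert hv₂T, dist_comm, hleaf₂ a₁ ha₁]
  simp only [sum_add_distrib, sum_const, smul_eq_mul]
  ring

end sums

def transformationA (G : SimpleGraph V) (u v₁ v₂ w₁ w₂ : V) : SimpleGraph V :=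
  fromEdgeSet ((G.edgeSet \ {s(u, v₁), s(u, v₂)}) ∪ {s(w₁, v₁), s(w₂, v₂)})

section transformationA

variable {u v₁ v₂ w₁ w₂ : V}

lemma transformationA_comm :
    transformationA G u v₂ v₁ w₂ w₁ = transformationA G u v₁ v₂ w₁ w₂ := by
  simp only [transformationA, Set.pair_comm]

lemma transformationA_adj_iff {a b : V} (ha₁ : a ≠ v₁) (ha₂ : a ≠ v₂) (hb₁ : b ≠ v₁)
    (hb₂ : b ≠ v₂) : (transformationA G u v₁ v₂ w₁ w₂).Adj a b ↔ G.Adj a b := by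
  simp only [transformationA, fromEdgeSet_adj, Set.mem_union, Set.mem_sdiff, mem_edgeSet,
    Set.mem_insert_iff, Set.mem_singleton_iff, Sym2.eq_iff]
  grind [Adj.ne]

lemma neighborSet_transformationA_left (hv₁ : G.neighborSet v₁ = {u}) (hv : v₁ ≠ v₂)
    (h₁₁ : v₁ ≠ w₁) (h₁₂ : v₁ ≠ w₂) :
    (transformationA G u v₁ v₂ w₁ w₂).neighborSet v₁ = {w₁} := by
  ext z
  have := Set.ext_iff.mp hv₁ z
  simp only [mem_neighborSet] at this ⊢
  simp only [transformationA, fromEdgeSet_adj, Set.mem_union, Set.mem_sdiff, mem_edgeSet,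
    Set.mem_insert_iff, Set.mem_singleton_iff, Sym2.eq_iff]
  grind

lemma neighborSet_transformationA_right (hv₂ : G.neighborSet v₂ = {u}) (hv : v₁ ≠ v₂)
    (h₂₁ : v₂ ≠ w₁) (h₂₂ : v₂ ≠ w₂) :
    (transformationA G u v₁ v₂ w₁ w₂).neighborSet v₂ = {w₂} := by
  rw [← transformationA_comm]
  exact neighborSet_transformationA_left hv₂ hv.symm h₂₂ h₂₁

lemma connected_transformationA (hG : G.Connected) (hv₁ : G.neighborSet v₁ = {u})
    (hv₂ : G.neighborSet v₂ = {u}) (hv : v₁ ≠ v₂) (h₁₁ : v₁ ≠ w₁) (h₁₂ : v₁ ≠ w₂)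
    (h₂₁ : v₂ ≠ w₁) (h₂₂ : v₂ ≠ w₂) : (transformationA G u v₁ v₂ w₁ w₂).Connected := by
  have hs : ∀ v ∈ ({v₁, v₂} : Set V), (G.neighborSet v).Subsingleton := by
    rintro v (rfl | rfl) <;> simp [hv₁, hv₂]
  have hu : u ∉ ({v₁, v₂} : Set V) := by
    have h₁ : G.Adj v₁ u := by simp [← mem_neighborSet, hv₁]
    have h₂ : G.Adj v₂ u := by simp [← mem_neighborSet, hv₂]
    simp [h₁.ne', h₂.ne']
  have hreach (x) (hx : x ∉ ({v₁, v₂} : Set V)) :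
      (transformationA G u v₁ v₂ w₁ w₂).Reachable u x := by
    obtain ⟨q, -⟩ := (hG u x).exists_walk_length_eq_dist_of_adj_imp
      (H := transformationA G u v₁ v₂ w₁ w₂) hs
      (fun a b ha hb => by
        simp only [Set.mem_insert_iff, Set.mem_singleton_iff, not_or] at ha hb
        exact (transformationA_adj_iff ha.1 ha.2 hb.1 hb.2).mpr)
      hu hx
    exact q.reachable
  refine connected_iff_exists_forall_reachable _ |>.mpr ⟨u, fun x => ?_⟩
  by_cases hx₁ : x = v₁
  · subst hx₁
    have : (transformationA G u x v₂ w₁ w₂).Adj x w₁ := by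
      simp [← mem_neighborSet, neighborSet_transformationA_left hv₁ hv h₁₁ h₁₂]
    exact (hreach w₁ (by simp [h₁₁.symm, h₂₁.symm])).trans this.symm.reachable
  by_cases hx₂ : x = v₂
  · subst hx₂
    have : (transformationA G u v₁ x w₁ w₂).Adj x w₂ := by
      simp [← mem_neighborSet, neighborSet_transformationA_right hv₂ hv h₂₁ h₂₂]
    exact (hreach w₂ (by simp [h₁₂.symm, h₂₂.symm])).trans this.symm.reachable
  exact hreach x (by simp [hx₁, hx₂])

lemma IsTree.dist_add_dist_eq_two_mul_of_neighborSet_eq (hG : G.IsTree)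
    (hu : G.neighborSet u = {v₁, v₂, w₁, w₂}) (hv₁ : G.neighborSet v₁ = {u})
    (hv₂ : G.neighborSet v₂ = {u}) (hw : w₁ ≠ w₂) {x : V} (hxu : x ≠ u) (hx₁ : x ≠ v₁)
    (hx₂ : x ≠ v₂) : G.dist x w₁ + G.dist x w₂ = 2 * G.dist x u := by
  have hadj (z) (hz : z ∈ ({v₁, v₂, w₁, w₂} : Set V)) : G.Adj z u := by
    rw [← hu] at hz; exact hz.symm
  obtain ⟨w, hwu, hdw⟩ := (hG.connected x u).exists_adj_dist_add_one_eq hxu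
  have hd₁ := (hG.connected x v₁).dist_eq_dist_add_one_of_neighborSet_eq hv₁ hx₁
  have hd₂ := (hG.connected x v₂).dist_eq_dist_add_one_of_neighborSet_eq hv₂ hx₂
  refine hG.dist_add_dist_eq_two_mul (hadj w₁ (by simp)) (hadj w₂ (by simp)) hw ?_
  have hwmem : w ∈ ({v₁, v₂, w₁, w₂} : Set V) := hu ▸ hwu
  rcases hwmem with rfl | rfl | rfl | rfl <;> omega

lemma dist_transformationA (hG : G.Connected) (hv₁ : G.neighborSet v₁ = {u})
    (hv₂ : G.neighborSet v₂ = {u}) (hv : v₁ ≠ v₂) (h₁₁ : v₁ ≠ w₁) (h₁₂ : v₁ ≠ w₂)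
    (h₂₁ : v₂ ≠ w₁) (h₂₂ : v₂ ≠ w₂) {x y : V} (hx₁ : x ≠ v₁) (hx₂ : x ≠ v₂) (hy₁ : y ≠ v₁)
    (hy₂ : y ≠ v₂) : (transformationA G u v₁ v₂ w₁ w₂).dist x y = G.dist x y := by
  refine (hG x y).dist_eq_of_adj_iff (s := {v₁, v₂}) ?_ ?_ ?_ (by simp [hx₁, hx₂])
    (by simp [hy₁, hy₂])
  · rintro v (rfl | rfl) <;> simp [hv₁, hv₂]
  · rintro v (rfl | rfl) <;> simp [neighborSet_transformationA_left hv₁ hv h₁₁ h₁₂,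
      neighborSet_transformationA_right hv₂ hv h₂₁ h₂₂]
  · intro a b ha hb
    simp only [Set.mem_insert_iff, Set.mem_singleton_iff, not_or] at ha hb
    exact (transformationA_adj_iff ha.1 ha.2 hb.1 hb.2).symm

lemma IsTree.sum_dist_add_dist_eq [Fintype V] [DecidableEq V] (hG : G.IsTree)
    (hu : G.neighborSet u = {v₁, v₂, w₁, w₂}) (hv₁ : G.neighborSet v₁ = {u})
    (hv₂ : G.neighborSet v₂ = {u}) (hw : w₁ ≠ w₂) :
    ∑ x ∈ {v₁, v₂}ᶜ, (G.dist x w₁ + G.dist x w₂) = 2 * ∑ x ∈ {v₁, v₂}ᶜ, G.dist x u + 2 := by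
  have hadj (z) (hz : z ∈ ({v₁, v₂, w₁, w₂} : Set V)) : G.Adj u z := by
    rw [← mem_neighborSet, hu]; exact hz
  have huT : u ∈ ({v₁, v₂}ᶜ : Finset V) := by
    simp [(hadj v₁ (by simp)).ne, (hadj v₂ (by simp)).ne]
  have hpoint (x) (hx : x ∈ ({v₁, v₂}ᶜ : Finset V)) :
      G.dist x w₁ + G.dist x w₂ = 2 * G.dist x u + if x = u then 2 else 0 := by
    split_ifs with hxu
    · rw [hxu, dist_eq_one_iff_adj.mpr (hadj w₁ (by simp)),
        dist_eq_one_iff_adj.mpr (hadj w₂ (by simp)), dist_self]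
    · simp only [mem_compl, mem_insert, mem_singleton, not_or] at hx
      simpa using hG.dist_add_dist_eq_two_mul_of_neighborSet_eq hu hv₁ hv₂ hw hxu hx.1 hx.2
  rw [sum_congr rfl hpoint, sum_add_distrib, sum_ite_eq' _ u, if_pos huT, mul_sum]

lemma IsTree.sum_sum_dist_transformationA [Fintype V] [DecidableEq V] (hG : G.IsTree)
    (hu : G.neighborSet u = {v₁, v₂, w₁, w₂}) (hv₁ : G.neighborSet v₁ = {u})
    (hv₂ : G.neighborSet v₂ = {u}) (hv : v₁ ≠ v₂) (hw : w₁ ≠ w₂) (h₁₁ : v₁ ≠ w₁)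
    (h₁₂ : v₁ ≠ w₂) (h₂₁ : v₂ ≠ w₁) (h₂₂ : v₂ ≠ w₂) :
    ∑ x, ∑ y, (transformationA G u v₁ v₂ w₁ w₂).dist x y = ∑ x, ∑ y, G.dist x y + 8 := by
  have hagree : ∀ x ∈ ({v₁, v₂}ᶜ : Finset V), ∀ y ∈ ({v₁, v₂}ᶜ : Finset V),
      (transformationA G u v₁ v₂ w₁ w₂).dist x y = G.dist x y := by
    simp only [mem_compl, mem_insert, mem_singleton, not_or]
    exact fun x hx y hy =>
      dist_transformationA hG.connected hv₁ hv₂ hv h₁₁ h₁₂ h₂₁ h₂₂ hx.1 hx.2 hy.1 hy.2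
  have hw₁ : w₁ ∈ ({v₁, v₂}ᶜ : Finset V) := by simp [h₁₁.symm, h₂₁.symm]
  have hw₂ : w₂ ∈ ({v₁, v₂}ᶜ : Finset V) := by simp [h₁₂.symm, h₂₂.symm]
  have hu₂ : u ≠ v₂ := (show G.Adj v₂ u by simp [← mem_neighborSet, hv₂]).ne'
  have huw₁ : G.Adj u w₁ := by simp [← mem_neighborSet, hu]
  have hww : G.dist w₁ w₂ = 2 := by
    simpa [dist_comm (u := w₁), dist_eq_one_iff_adj.mpr huw₁] using
      hG.dist_add_dist_eq_two_mul_of_neighborSet_eq hu hv₁ hv₂ hw huw₁.ne' h₁₁.symm h₂₁.symm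
  have hkey : ∑ x ∈ {v₁, v₂}ᶜ, ((transformationA G u v₁ v₂ w₁ w₂).dist x w₁
      + (transformationA G u v₁ v₂ w₁ w₂).dist x w₂) = 2 * ∑ x ∈ {v₁, v₂}ᶜ, G.dist x u + 2 := by
    rw [← hG.sum_dist_add_dist_eq hu hv₁ hv₂ hw]
    exact sum_congr rfl fun x hx => by rw [hagree x hx w₁ hw₁, hagree x hx w₂ hw₂]
  have hG' := connected_transformationA hG.connected hv₁ hv₂ hv h₁₁ h₁₂ h₂₁ h₂₂
  rw [hG'.sum_sum_dist_eq_of_two_leaves (neighborSet_transformationA_left hv₁ hv h₁₁ h₁₂)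
      (neighborSet_transformationA_right hv₂ hv h₂₁ h₂₂) hv h₂₁.symm,
    hG.connected.sum_sum_dist_eq_of_two_leaves hv₁ hv₂ hv hu₂,
    sum_congr rfl fun x hx => sum_congr rfl fun y hy => hagree x hx y hy,
    hkey, hagree w₁ hw₁ w₂ hw₂, hww, dist_self, sum_add_distrib]
  ring

end transformationA

end SimpleGraph

open SimpleGraph

/-- Transformation A increases the Wiener index by exactly 4. -/
theorem wiener_transformationA {V : Type*} [Fintype V] [DecidableEq V]
    (G : SimpleGraph V) [DecidableRel G.Adj] (hT : G.IsTree)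
    (u v₁ v₂ w₁ w₂ : V) (hv : v₁ ≠ v₂) (hw : w₁ ≠ w₂)
    (huv₁ : G.Adj u v₁) (huv₂ : G.Adj u v₂) (huw₁ : G.Adj u w₁) (huw₂ : G.Adj u w₂)
    (hdu : G.degree u = 4)
    (hdv₁ : G.degree v₁ = 1) (hdv₂ : G.degree v₂ = 1)
    (hdw₁ : G.degree w₁ ≠ 1) (hdw₂ : G.degree w₂ ≠ 1) :
    wiener (SimpleGraph.fromEdgeSet
        ((G.edgeSet \ {s(u, v₁), s(u, v₂)}) ∪ {s(w₁, v₁), s(w₂, v₂)}))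
      = wiener G + 4 := by
  have hne {a b : V} (ha : G.degree a = 1) (hb : G.degree b ≠ 1) : a ≠ b := fun h => hb (h ▸ ha)
  have hleaf {v : V} (huv : G.Adj u v) (hd : G.degree v = 1) : G.neighborSet v = {u} := by
    simpa using neighborSet_eq_of_subset_of_degree_le (s := {u}) (by simpa using huv.symm) hd.le
  have hu : G.neighborSet u = {v₁, v₂, w₁, w₂} := by
    have hcard : ({v₁, v₂, w₁, w₂} : Finset V).card = 4 := by
      simp [hv, hw, hne hdv₁ hdw₁, hne hdv₁ hdw₂, hne hdv₂ hdw₁, hne hdv₂ hdw₂]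
    simpa using neighborSet_eq_of_subset_of_degree_le (s := {v₁, v₂, w₁, w₂})
      (by simpa using ⟨huv₁, huv₂, huw₁, huw₂⟩) (hdu.trans hcard.symm).le
  have hsum := hT.sum_sum_dist_transformationA hu (hleaf huv₁ hdv₁) (hleaf huv₂ hdv₂) hv hw
    (hne hdv₁ hdw₁) (hne hdv₁ hdw₂) (hne hdv₂ hdw₁) (hne hdv₂ hdw₂)
  change (∑ x, ∑ y, (transformationA G u v₁ v₂ w₁ w₂).dist x y) / 2 = (∑ x, ∑ y, G.dist x y) / 2 + 4
  omega
end

section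
/- For even n ≥ 18, integers d with 4 ≤ d ≤ ⌊n/4⌋, and integer x with 1 ≤ x ≤ (n−4d+2)/2, the Wiener index of the caterpillar B₂(n,d,x) equals (d/2 + 1)n² + (−2d − 2)n − 8d³/3 + 32d/3 − 5 + 8x − 8dx − 2x². -/
/-!
In a caterpillar the distance between `(j, i)` and `(j', i')` is `|i - i'|` plus one for each
endpoint that is a leaf. This function vanishes on the diagonal, grows by at most one along an
edge, and away from the target drops by exactly one along a suitable edge, so it is the graph
distance. Summing it, the ordered distance sum is `∑ w_i w_{i'} |i - i'| + 2ℓ(N - 1)`, where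
`w_i = L i + 1` is the number of vertices over the spine vertex `u_i`, `ℓ` the number of leaves and
`N` the order. For `B₂(n,d,x)` the weights are `2` except on the shells `|i| = d - 1` (weight
`x + 1`) and `|i| = d` (weight `r + 1`), so expanding `w = 2 + e` reduces the double sum to
`∑_{|j| ≤ m} |a - j| = a² + m² + m` for `|a| ≤ m` and `3 ∑_{|i|, |j| ≤ m} |i - j| = 4m(m+1)(2m+1)`.
-/

namespace SimpleGraph

open Finset

variable {V : Type*}

theorem even_sum_sum_dist [Fintype V] (G : SimpleGraph V) : Even (∑ u, ∑ v, G.dist u v) := by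
  rw [← ZMod.natCast_eq_zero_iff_even, ← sum_product']
  push_cast
  refine sum_involution (fun p _ => p.swap) (fun p _ => ?_) (fun p _ hp => ?_) (by simp) (by simp)
  · rw [Prod.fst_swap, Prod.snd_swap, dist_comm, ← two_mul]
    exact mul_eq_zero_of_left rfl _
  · intro h
    have hdiag : p.1 = p.2 := congrArg Prod.snd h
    rw [hdiag, dist_self, Nat.cast_zero] at hp
    exact hp rfl

lemma two_mul_wiener [Fintype V] (G : SimpleGraph V) :
    2 * wiener G = ∑ u, ∑ v, G.dist u v :=
  Nat.two_mul_div_two_of_even G.even_sum_sum_dist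

variable {G : SimpleGraph V}

lemma Walk.le_add_length_of_le_add_one {f : V → ℕ} (hf : ∀ a b, G.Adj a b → f a ≤ f b + 1)
    {u v : V} (p : G.Walk u v) : f u ≤ f v + p.length := by
  induction p with
  | nil => simp
  | cons h _ ih => rw [Walk.length_cons]; have := hf _ _ h; omega

lemma exists_walk_length_eq_of_descent {f : V → ℕ} {v : V} (hv : f v = 0)
    (hdesc : ∀ u, u ≠ v → ∃ u', G.Adj u u' ∧ f u' + 1 = f u) (u : V) :
    ∃ p : G.Walk u v, p.length = f u := by
  induction hk : f u using Nat.strong_induction_on generalizing u with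
  | _ k ih =>
    by_cases huv : u = v
    · subst huv; exact ⟨Walk.nil, by rw [Walk.length_nil, ← hk, hv]⟩
    · obtain ⟨u', hadj, hu'⟩ := hdesc u huv
      obtain ⟨p, hp⟩ := ih (f u') (by omega) u' rfl
      exact ⟨Walk.cons hadj p, by rw [Walk.length_cons, hp]; omega⟩

theorem dist_eq_of_le_add_one_of_descent {f : V → ℕ} {v : V} (hv : f v = 0)
    (hf : ∀ a b, G.Adj a b → f a ≤ f b + 1)
    (hdesc : ∀ u, u ≠ v → ∃ u', G.Adj u u' ∧ f u' + 1 = f u) (u : V) : G.dist u v = f u := by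
  obtain ⟨p, hp⟩ := exists_walk_length_eq_of_descent hv hdesc u
  obtain ⟨q, hq⟩ := p.reachable.exists_walk_length_eq_dist
  have hlower := q.le_add_length_of_le_add_one hf
  have hupper := dist_le p
  omega

end SimpleGraph

section IntervalSums

open Finset

lemma sum_Icc_neg_succ {M : Type*} [AddCommMonoid M] {m : ℤ} (hm : 0 ≤ m) (f : ℤ → M) :
    ∑ i ∈ Icc (-(m + 1)) (m + 1), f i = f (m + 1) + f (-(m + 1)) + ∑ i ∈ Icc (-m) m, f i := by
  have h : Icc (-(m + 1)) (m + 1) = insert (m + 1) (insert (-(m + 1)) (Icc (-m) m)) := by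
    ext i; simp only [mem_insert, mem_Icc]; omega
  rw [h, sum_insert (by simp only [mem_insert, mem_Icc]; omega),
    sum_insert (by simp only [mem_Icc]; omega), add_assoc]

lemma sum_Icc_neg_sq {m : ℤ} (hm : 0 ≤ m) :
    3 * ∑ i ∈ Icc (-m) m, i ^ 2 = m * (m + 1) * (2 * m + 1) := by
  induction m, hm using Int.leInduction with
  | base => simp
  | succ m hm ih => rw [sum_Icc_neg_succ hm, mul_add, ih]; ring

lemma sum_Icc_abs_sub_of_lt {m a : ℤ} (hm : 0 ≤ m) (ha : m < |a|) :
    ∑ j ∈ Icc (-m) m, |a - j| = (2 * m + 1) * |a| := by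
  induction m, hm using Int.leInduction with
  | base => simp
  | succ m hm ih =>
    rw [sum_Icc_neg_succ hm, ih (by omega)]
    grind

lemma sum_Icc_abs_sub {m a : ℤ} (ha : |a| ≤ m) :
    ∑ j ∈ Icc (-m) m, |a - j| = a ^ 2 + m ^ 2 + m := by
  induction m, (abs_nonneg a).trans ha using Int.leInduction generalizing a with
  | base => simp_all
  | succ m hm ih =>
    rw [sum_Icc_neg_succ hm]
    rcases ha.lt_or_eq with ha | ha
    · rw [ih (by omega)]; grind
    · have hsq : a ^ 2 = (m + 1) ^ 2 := by rw [← sq_abs, ha]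
      have hends : |a - (m + 1)| + |a - -(m + 1)| = 2 * (m + 1) := by
        rcases (abs_eq (by omega)).1 ha with rfl | rfl <;> simp only [abs_eq_max_neg] <;> omega
      rw [sum_Icc_abs_sub_of_lt hm (by omega), ha]
      linear_combination hends - hsq

lemma sum_Icc_sum_Icc_abs_sub {m : ℤ} (hm : 0 ≤ m) :
    3 * ∑ i ∈ Icc (-m) m, ∑ j ∈ Icc (-m) m, |i - j| = 4 * m * (m + 1) * (2 * m + 1) := by
  have h : ∀ i ∈ Icc (-m) m, ∑ j ∈ Icc (-m) m, |i - j| = i ^ 2 + (m ^ 2 + m) := fun i hi => by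
    rw [sum_Icc_abs_sub (abs_le.2 (mem_Icc.1 hi)), add_assoc]
  rw [sum_congr rfl h, sum_add_distrib, mul_add, sum_Icc_neg_sq hm, sum_const, Int.card_Icc,
    nsmul_eq_mul, Int.toNat_of_nonneg (by omega)]
  ring

lemma abs_sub_add_abs_sub_neg (a b : ℤ) : |a - b| + |a - -b| = 2 * max |a| |b| := by
  simp only [abs_eq_max_neg]; omega

lemma sum_Icc_ite_abs_eq {M : Type*} [AddCommMonoid M] {m p : ℤ} (hp : 0 < p) (hpm : p ≤ m)
    (f : ℤ → M) : ∑ i ∈ Icc (-m) m, (if |i| = p then f i else 0) = f p + f (-p) := by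
  have h : (Icc (-m) m).filter (fun i => |i| = p) = {p, -p} := by
    ext i
    simp only [mem_filter, mem_Icc, mem_insert, mem_singleton]
    rw [abs_eq_max_neg]
    omega
  rw [← sum_filter, h, sum_pair (by omega)]

lemma sum_Icc_shells_mul {m p q α β : ℤ} (hp : 0 < p) (hpm : p ≤ m) (hq : 0 < q) (hqm : q ≤ m)
    (F : ℤ → ℤ) :
    ∑ i ∈ Icc (-m) m, ((if |i| = p then α else 0) + (if |i| = q then β else 0)) * F i
      = α * (F p + F (-p)) + β * (F q + F (-q)) := by
  simp only [add_mul, ite_mul, zero_mul, sum_add_distrib]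
  rw [sum_Icc_ite_abs_eq hp hpm, sum_Icc_ite_abs_eq hq hqm]
  ring

lemma sum_sum_add_mul_add_mul_abs (s : Finset ℤ) (c : ℤ) (e : ℤ → ℤ) :
    ∑ i ∈ s, ∑ j ∈ s, (c + e i) * (c + e j) * |i - j|
      = c ^ 2 * ∑ i ∈ s, ∑ j ∈ s, |i - j| + 2 * c * ∑ i ∈ s, e i * ∑ j ∈ s, |i - j|
        + ∑ i ∈ s, e i * ∑ j ∈ s, e j * |i - j| := by
  have hswap : ∑ i ∈ s, ∑ j ∈ s, e j * |i - j| = ∑ i ∈ s, e i * ∑ j ∈ s, |i - j| := by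
    rw [sum_comm]; simp only [mul_sum, abs_sub_comm]
  have hexp : ∀ i j, (c + e i) * (c + e j) * |i - j|
      = c ^ 2 * |i - j| + c * (e i * |i - j|) + c * (e j * |i - j|) + e i * (e j * |i - j|) :=
    fun i j => by ring
  simp only [hexp, sum_add_distrib, ← mul_sum]
  rw [hswap]
  ring

end IntervalSums

namespace Caterpillar

open Finset SimpleGraph

variable {d : ℤ} {L : ℤ → ℕ}

lemma mem_catVerts {a : ℤ × ℤ} :
    a ∈ catVerts d L ↔ -d ≤ a.2 ∧ a.2 ≤ d ∧ 0 ≤ a.1 ∧ a.1 ≤ L a.2 := by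
  simp only [catVerts, mem_biUnion, mem_image, mem_Icc]
  constructor
  · rintro ⟨i, hi, j, hj, rfl⟩
    exact ⟨hi.1, hi.2, hj⟩
  · rintro ⟨h1, h2, h3⟩
    exact ⟨a.2, ⟨h1, h2⟩, a.1, h3, rfl⟩

lemma spine_mem {i : ℤ} (h1 : -d ≤ i) (h2 : i ≤ d) : ((0 : ℤ), i) ∈ catVerts d L :=
  mem_catVerts.2 ⟨h1, h2, le_rfl, Int.natCast_nonneg _⟩

lemma caterpillar_adj {u v : catVerts d L} :
    (caterpillar d L).Adj u v ↔ u.1 ≠ v.1 ∧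
      ((u.1.1 = 0 ∧ v.1.1 = 0 ∧ (u.1.2 + 1 = v.1.2 ∨ v.1.2 + 1 = u.1.2)) ∨
       (u.1.2 = v.1.2 ∧ (u.1.1 = 0 ∧ v.1.1 ≠ 0 ∨ v.1.1 = 0 ∧ u.1.1 ≠ 0))) := by
  rw [caterpillar, fromRel_adj, ne_eq, Subtype.ext_iff]
  grind

def legLength (a : ℤ × ℤ) : ℕ := if a.1 = 0 then 0 else 1

def catDist (a b : ℤ × ℤ) : ℕ :=
  if a = b then 0 else (a.2 - b.2).natAbs + legLength a + legLength b

lemma catDist_le_of_adj {u v : catVerts d L} (h : (caterpillar d L).Adj u v) (c : ℤ × ℤ) :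
    catDist u c ≤ catDist v c + 1 := by
  rw [caterpillar_adj] at h
  simp only [catDist, legLength, Prod.ext_iff] at h ⊢
  split_ifs <;> omega

lemma exists_adj_catDist_succ {u v : catVerts d L} (huv : u ≠ v) :
    ∃ u', (caterpillar d L).Adj u u' ∧ catDist u' v + 1 = catDist u v := by
  obtain ⟨hu1, hu2, hu3, -⟩ := mem_catVerts.1 u.2
  obtain ⟨hv1, hv2, hv3, -⟩ := mem_catVerts.1 v.2
  have huv' : u.1.1 ≠ v.1.1 ∨ u.1.2 ≠ v.1.2 := by
    rw [ne_eq, Subtype.ext_iff, Prod.ext_iff] at huv; omega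
  by_cases hleaf : u.1.1 = 0
  · rcases lt_trichotomy u.1.2 v.1.2 with hlt | heq | hgt
    · refine ⟨⟨(0, u.1.2 + 1), spine_mem (by omega : -d ≤ u.1.2 + 1) (by omega)⟩, ?_, ?_⟩
      · rw [caterpillar_adj]; simp only [ne_eq, Prod.ext_iff]; grind
      · simp only [catDist, legLength, Prod.ext_iff]; split_ifs <;> omega
    · refine ⟨v, ?_, ?_⟩
      · rw [caterpillar_adj]; simp only [ne_eq, Prod.ext_iff]; grind
      · simp only [catDist, legLength, Prod.ext_iff]; split_ifs <;> omega
    · refine ⟨⟨(0, u.1.2 - 1), spine_mem (by omega : -d ≤ u.1.2 - 1) (by omega)⟩, ?_, ?_⟩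
      · rw [caterpillar_adj]; simp only [ne_eq, Prod.ext_iff]; grind
      · simp only [catDist, legLength, Prod.ext_iff]; split_ifs <;> omega
  · refine ⟨⟨(0, u.1.2), spine_mem hu1 hu2⟩, ?_, ?_⟩
    · rw [caterpillar_adj]; simp only [ne_eq, Prod.ext_iff]; grind
    · simp only [catDist, legLength, Prod.ext_iff]; split_ifs <;> omega

theorem dist_caterpillar (u v : catVerts d L) : (caterpillar d L).dist u v = catDist u v :=
  dist_eq_of_le_add_one_of_descent (f := fun w => catDist w.1 v.1) (by simp [catDist])
    (fun _ _ h => catDist_le_of_adj h v) (fun _ h => exists_adj_catDist_succ h) u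

lemma sum_catVerts {M : Type*} [AddCommMonoid M] (F : ℤ × ℤ → M) :
    ∑ a ∈ catVerts d L, F a = ∑ i ∈ Icc (-d) d, ∑ j ∈ Icc (0 : ℤ) (L i), F (j, i) := by
  rw [catVerts, sum_biUnion]
  · refine sum_congr rfl fun i _ => sum_image fun j _ j' _ h => congrArg Prod.fst h
  · intro i _ i' _ hii'
    simp only [Function.onFun, Finset.disjoint_left, mem_image]
    rintro _ ⟨j, -, rfl⟩ ⟨j', -, h⟩
    exact hii' (congrArg Prod.snd h).symm

lemma sum_catVerts_snd (F : ℤ → ℤ) :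
    ∑ a ∈ catVerts d L, F a.2 = ∑ i ∈ Icc (-d) d, ((L i : ℤ) + 1) * F i := by
  rw [sum_catVerts]
  refine sum_congr rfl fun i _ => ?_
  simp only [sum_const, Int.card_Icc, nsmul_eq_mul]
  rw [Int.toNat_of_nonneg (by omega)]
  ring

lemma sum_catVerts_legLength :
    ∑ a ∈ catVerts d L, (legLength a : ℤ) = ∑ i ∈ Icc (-d) d, (L i : ℤ) := by
  rw [sum_catVerts]
  refine sum_congr rfl fun i _ => ?_
  have hIcc : Icc (0 : ℤ) (L i) = insert 0 (Icc (1 : ℤ) (L i)) := by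
    ext j; simp only [mem_insert, mem_Icc]; omega
  rw [hIcc, sum_insert (by simp), sum_congr rfl fun j hj => by
    rw [legLength, if_neg (by simp only [mem_Icc] at hj; omega)]]
  simp [legLength]

lemma catDist_cast (a b : ℤ × ℤ) :
    (catDist a b : ℤ) = |a.2 - b.2| + legLength a + legLength b
      - if a = b then 2 * (legLength a : ℤ) else 0 := by
  rw [catDist]
  split_ifs with h
  · subst h; rw [sub_self, abs_zero]; ring
  · push_cast [Int.natCast_natAbs]; ring

lemma card_catVerts : ((catVerts d L).card : ℤ) = ∑ i ∈ Icc (-d) d, ((L i : ℤ) + 1) := by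
  simpa using sum_catVerts_snd (L := L) (fun _ => (1 : ℤ))

theorem sum_sum_dist_caterpillar :
    ∑ u : catVerts d L, ∑ v : catVerts d L, ((caterpillar d L).dist u v : ℤ)
      = ∑ i ∈ Icc (-d) d, ∑ j ∈ Icc (-d) d, ((L i : ℤ) + 1) * ((L j : ℤ) + 1) * |i - j|
        + 2 * (∑ i ∈ Icc (-d) d, (L i : ℤ)) * (∑ i ∈ Icc (-d) d, ((L i : ℤ) + 1) - 1) := by
  have hspine : ∑ a ∈ catVerts d L, ∑ b ∈ catVerts d L, |a.2 - b.2|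
      = ∑ i ∈ Icc (-d) d, ∑ j ∈ Icc (-d) d, ((L i : ℤ) + 1) * ((L j : ℤ) + 1) * |i - j| := by
    rw [sum_congr rfl fun a _ => sum_catVerts_snd (fun j => |a.2 - j|),
      sum_catVerts_snd (fun i => ∑ j ∈ Icc (-d) d, ((L j : ℤ) + 1) * |i - j|)]
    simp only [mul_sum, mul_assoc]
  have hdiag : ∑ a ∈ catVerts d L, ∑ b ∈ catVerts d L,
      (if a = b then 2 * (legLength a : ℤ) else 0) = 2 * ∑ a ∈ catVerts d L, (legLength a : ℤ) := by
    rw [mul_sum]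
    exact sum_congr rfl fun a ha => by rw [sum_ite_eq, if_pos ha]
  have hcoe : ∑ u : catVerts d L, ∑ v : catVerts d L, ((caterpillar d L).dist u v : ℤ)
      = ∑ a ∈ catVerts d L, ∑ b ∈ catVerts d L, (catDist a b : ℤ) := by
    simp only [dist_caterpillar]
    rw [← sum_coe_sort (catVerts d L)]
    exact sum_congr rfl fun u _ => sum_coe_sort (catVerts d L) (fun b => (catDist u.1 b : ℤ))
  rw [hcoe, ← card_catVerts, ← sum_catVerts_legLength]
  simp only [catDist_cast, sum_sub_distrib, sum_add_distrib, sum_const, nsmul_eq_mul, ← mul_sum]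
  rw [hspine, hdiag]
  ring

end Caterpillar

section B2

open Finset

variable {n d x R : ℤ}

lemma B2L_add_one (hx : 0 ≤ x) (hR0 : 0 ≤ R) (hR : 2 * R = n - 4 * d - 2 * x + 2)
    {i : ℤ} (hi : |i| ≤ d) :
    (B2L n d x i : ℤ) + 1
      = 2 + ((if |i| = d then R - 1 else 0) + (if |i| = d - 1 then x - 1 else 0)) := by
  simp only [B2L]
  rw [abs_eq_max_neg] at hi ⊢
  push_cast
  split_ifs <;> omega

lemma sum_B2L_add_one (hd : 2 ≤ d) (hx : 0 ≤ x) (hR0 : 0 ≤ R)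
    (hR : 2 * R = n - 4 * d - 2 * x + 2) :
    ∑ i ∈ Icc (-d) d, ((B2L n d x i : ℤ) + 1) = n := by
  rw [sum_congr rfl fun i hi => B2L_add_one hx hR0 hR (abs_le.2 (mem_Icc.1 hi)),
    sum_add_distrib]
  have := sum_Icc_shells_mul (α := R - 1) (β := x - 1) (by omega) le_rfl (by omega)
    (by omega : d - 1 ≤ d) (fun _ => 1)
  simp only [mul_one] at this
  rw [this, sum_const, Int.card_Icc, nsmul_eq_mul, Int.toNat_of_nonneg (by omega)]
  linear_combination hR

lemma three_mul_sum_sum_B2L_mul_abs (hd : 2 ≤ d) (hx : 0 ≤ x) (hR0 : 0 ≤ R)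
    (hR : 2 * R = n - 4 * d - 2 * x + 2) :
    3 * ∑ i ∈ Icc (-d) d, ∑ j ∈ Icc (-d) d,
        ((B2L n d x i : ℤ) + 1) * ((B2L n d x j : ℤ) + 1) * |i - j|
      = 32 * d ^ 3 - 48 * d ^ 2 + 64 * d - 36 + 12 * R * d * (4 * d + R + 2 * x - 2)
        + 12 * x * (4 * d ^ 2 + d * x - 6 * d - x + 4) := by
  have hw : ∀ i ∈ Icc (-d) d, (B2L n d x i : ℤ) + 1 = _ :=
    fun i hi => B2L_add_one hx hR0 hR (abs_le.2 (mem_Icc.1 hi))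
  rw [sum_congr rfl fun i hi => sum_congr rfl fun j hj => by rw [hw i hi, hw j hj],
    sum_sum_add_mul_add_mul_abs]
  have hshells := fun F => sum_Icc_shells_mul (α := R - 1) (β := x - 1) (by omega : 0 < d) le_rfl
    (by omega : 0 < d - 1) (by omega : d - 1 ≤ d) F
  have hd0 : |d| = d := abs_of_nonneg (by omega)
  have hd1 : |d - 1| = d - 1 := abs_of_nonneg (by omega)
  simp only [hshells, abs_sub_add_abs_sub_neg, abs_neg, hd0, hd1, max_self,
    max_eq_left (by omega : d - 1 ≤ d), max_eq_right (by omega : d - 1 ≤ d)]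
  rw [sum_Icc_abs_sub (by rw [hd0]), sum_Icc_abs_sub (by rw [abs_neg, hd0]),
    sum_Icc_abs_sub (by rw [hd1]; omega), sum_Icc_abs_sub (by rw [abs_neg, hd1]; omega)]
  linear_combination 4 * sum_Icc_sum_Icc_abs_sub (show 0 ≤ d by omega)

end B2

theorem wiener_B2_general (n d x : ℤ) (hne : Even n)
    (hd1 : 4 ≤ d)
    (hx1 : 1 ≤ x) (hx2 : 2 * x ≤ n - 4 * d + 2) :
    (wiener (B2 n d x) : ℚ)
      = ((d:ℚ) / 2 + 1) * (n : ℚ)^2 + (-(2 * (d:ℚ)) - 2) * (n : ℚ)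
        - 8 * (d:ℚ)^3 / 3 + 32 * (d:ℚ) / 3 - 5 + 8 * (x:ℚ) - 8 * (d:ℚ) * (x:ℚ)
        - 2 * (x:ℚ)^2 := by
  obtain ⟨R, hR⟩ : ∃ R, 2 * R = n - 4 * d - 2 * x + 2 := by
    obtain ⟨t, rfl⟩ := hne
    exact ⟨t - 2 * d - x + 1, by ring⟩
  have hR0 : 0 ≤ R := by omega
  have hN := sum_B2L_add_one (by omega : 2 ≤ d) (by omega : 0 ≤ x) hR0 hR
  have hleaves : ∑ i ∈ Finset.Icc (-d) d, (B2L n d x i : ℤ) = n - 2 * d - 1 := by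
    rw [Finset.sum_add_distrib, Finset.sum_const, Int.card_Icc, nsmul_eq_mul] at hN
    omega
  have hQ := three_mul_sum_sum_B2L_mul_abs (by omega : 2 ≤ d) (by omega : 0 ≤ x) hR0 hR
  have hsum := Caterpillar.sum_sum_dist_caterpillar (d := d) (L := B2L n d x)
  rw [hN, hleaves] at hsum
  have hW := congrArg (Nat.cast : ℕ → ℤ) (SimpleGraph.two_mul_wiener (caterpillar d (B2L n d x)))
  push_cast at hW
  have h6W : 6 * (wiener (caterpillar d (B2L n d x)) : ℤ) = 32 * d ^ 3 - 48 * d ^ 2 + 64 * d - 36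
      + 12 * R * d * (4 * d + R + 2 * x - 2) + 12 * x * (4 * d ^ 2 + d * x - 6 * d - x + 4)
      + 6 * (n - 2 * d - 1) * (n - 1) := by
    linear_combination 3 * hW + 3 * hsum + hQ
  obtain rfl : n = 2 * R + 4 * d + 2 * x - 2 := by omega
  have h6WQ := congrArg (Int.cast : ℤ → ℚ) h6W
  push_cast at h6WQ ⊢
  unfold B2
  linear_combination h6WQ / 6

/-- the Wiener index of the caterpillar `B₂(n,d,x)` for even `n ≥ 18`,
`4 ≤ d ≤ ⌊n/4⌋` and `1 ≤ x ≤ (n−4d+2)/2`. -/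
theorem wiener_B2 (n d x : ℤ) (hne : Even n) (hn : 18 ≤ n)
    (hd1 : 4 ≤ d) (hd2 : 4 * d ≤ n)
    (hx1 : 1 ≤ x) (hx2 : 2 * x ≤ n - 4 * d + 2) :
    (wiener (B2 n d x) : ℚ)
      = ((d:ℚ) / 2 + 1) * (n : ℚ)^2 + (-(2 * (d:ℚ)) - 2) * (n : ℚ)
        - 8 * (d:ℚ)^3 / 3 + 32 * (d:ℚ) / 3 - 5 + 8 * (x:ℚ) - 8 * (d:ℚ) * (x:ℚ)
        - 2 * (x:ℚ)^2 :=
  wiener_B2_general n d x hne hd1 hx1 hx2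
end

section
/- With d₁ = ⌈(n−2)/4⌉, x₁ = (4 + 4d₁ − n)/2, and d₂ = ⌊n/4⌋, the caterpillars B₁(n, d₁, x₁) and B₂(n, d₂, 1) are isomorphic (in particular they have equal Wiener index). -/
lemma Int.add_one_ediv_four_of_even {n : ℤ} (hn : Even n) : (n + 1) / 4 = n / 4 := by
  obtain ⟨k, rfl⟩ := hn
  omega

/-- With `d = n / 4`, both caterpillars carry exactly one leaf at each `u_i` with `|i| ≤ d - 1`
if `4 ∣ n`, and with `|i| ≤ d` otherwise. -/
lemma B1L_eq_B2L {n : ℤ} (hn : Even n) (h : 2 ≤ n) :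
    B1L n (n / 4) ((4 + 4 * (n / 4) - n) / 2) = B2L n (n / 4) 1 := by
  obtain ⟨k, rfl⟩ := hn
  funext i
  simp only [B1L, B2L]
  rcases abs_cases i with ⟨hi, hi₀⟩ | ⟨hi, hi₀⟩ <;> rw [hi] <;> split_ifs <;> omega

/-- For even `n`, the floor division `(n + 1) / 4` equals `⌈(n−2)/4⌉`. -/
theorem B1_iso_B2 (n : ℤ) (hne : Even n) (hn : 18 ≤ n) :
    Nonempty ((B1 n ((n + 1) / 4) ((4 + 4 * ((n + 1) / 4) - n) / 2)) ≃g (B2 n (n / 4) 1)) ∧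
    wiener (B1 n ((n + 1) / 4) ((4 + 4 * ((n + 1) / 4) - n) / 2))
      = wiener (B2 n (n / 4) 1) := by
  rw [Int.add_one_ediv_four_of_even hne, B1, B2, B1L_eq_B2L hne (by omega)]
  exact ⟨⟨.refl⟩, rfl⟩
end

section
/- For integers n (even), d, x with x ≥ 2 and s ∈ {−1,0,1,2} such that G₁(n,d,x,s) is defined: W(G₁(n,d,x−1,s)) − W(G₁(n,d,x,s)) = 2n − 4x, and this difference is divisible by 4. -/
/-
A caterpillar vertex is a spine position `i` together with a height `0` (spine) or `1` (leaf),
and the distance between two distinct vertices is `|i - i'|` plus their heights. Summing over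
all ordered pairs, `2 W = ∑ᵢ ∑ⱼ wᵢ wⱼ |i - j| + 2 ℓ (N - 1)`, where `wᵢ` is the number of
vertices over `u_i`, `ℓ` the number of leaves and `N` the number of vertices.

Passing from `G₁(n,d,x,s)` to `G₁(n,d,x-1,s)` moves the leaves at `u_a`, `u_b`
(`a = x-d-1`, `b = d+1-x`) to `u_{a-1}`, `u_{b+1}`. This keeps `ℓ` and `N`, and by bilinearity
changes the quadratic term by `4 ∑_{a ≤ i ≤ b} wᵢ - 4`, because
`|v-a+1| - |v-a| - |v-b| + |v-b-1|` is `2` on `[a, b]` and `0` elsewhere. In `G₁(n,d,x,s)`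
that window holds `n - 2x + 1` vertices, so `W` drops by `2n - 4x`.
-/

open Finset

theorem SimpleGraph.dist_eq_of_descent {V : Type*} {G : SimpleGraph V} (D : V → V → ℕ)
    (hself : ∀ v, D v v = 0) (hadj : ∀ u w v, G.Adj u w → D u v ≤ D w v + 1)
    (hdesc : ∀ u v, u ≠ v → ∃ w, G.Adj u w ∧ D u v = D w v + 1) (u v : V) :
    G.dist u v = D u v := by
  have hle : ∀ {u} (p : G.Walk u v), D u v ≤ p.length := by
    intro u p
    induction p with
    | nil => simp [hself]
    | cons h p ih => rw [Walk.length_cons]; exact (hadj _ _ _ h).trans (by omega)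
  have hwalk : ∀ n u, D u v = n → ∃ p : G.Walk u v, p.length = n := by
    intro n
    induction n with
    | zero =>
      intro u hu
      obtain rfl : u = v := by
        by_contra hne
        obtain ⟨w, -, hw⟩ := hdesc u v hne
        omega
      exact ⟨.nil, rfl⟩
    | succ n ih =>
      intro u hu
      have hne : u ≠ v := by rintro rfl; simp [hself] at hu
      obtain ⟨w, huw, hw⟩ := hdesc u v hne
      obtain ⟨p, hp⟩ := ih w (by omega)
      exact ⟨.cons huw p, by simp [hp]⟩
  obtain ⟨p, hp⟩ := hwalk _ u rfl
  obtain ⟨q, hq⟩ := p.reachable.exists_walk_length_eq_dist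
  exact le_antisymm (hp ▸ SimpleGraph.dist_le p) (hq ▸ hle q)

theorem even_sum_sum_of_symm {V : Type*} [Fintype V] (f : V → V → ℕ)
    (hsymm : ∀ u v, f u v = f v u) (hdiag : ∀ v, f v v = 0) : Even (∑ u, ∑ v, f u v) := by
  rw [← ZMod.natCast_eq_zero_iff_even]
  push_cast
  rw [← Fintype.sum_prod_type']
  refine sum_ninvolution Prod.swap (fun p => ?_) (fun p hp hswap => hp ?_) (by simp) (by simp)
  · rw [Prod.fst_swap, Prod.snd_swap, hsymm, ← two_mul]
    exact zero_mul _
  · rw [← Prod.fst_swap (p := p), hswap, hdiag, Nat.cast_zero]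

theorem two_mul_wiener {V : Type*} [Fintype V] (G : SimpleGraph V) :
    2 * wiener G = ∑ u, ∑ v, G.dist u v :=
  Nat.mul_div_cancel' (even_iff_two_dvd.mp
    (even_sum_sum_of_symm _ (fun _ _ => SimpleGraph.dist_comm) (fun _ => SimpleGraph.dist_self)))

section WeightedPath

variable (I : Finset ℤ)

def potential (w : ℤ → ℤ) (v : ℤ) : ℤ := ∑ j ∈ I, w j * |v - j|

def weightedDistSum (w : ℤ → ℤ) : ℤ := ∑ i ∈ I, w i * potential I w i

lemma potential_add (w f : ℤ → ℤ) (v : ℤ) :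
    potential I (w + f) v = potential I w v + potential I f v := by
  simp only [potential, Pi.add_apply, add_mul, sum_add_distrib]

lemma sum_mul_potential_comm (w f : ℤ → ℤ) :
    ∑ i ∈ I, f i * potential I w i = ∑ i ∈ I, w i * potential I f i := by
  simp only [potential, mul_sum]
  rw [sum_comm]
  exact sum_congr rfl fun i _ => sum_congr rfl fun j _ => by rw [abs_sub_comm]; ring

lemma weightedDistSum_add (w f : ℤ → ℤ) :
    weightedDistSum I (w + f) =
      weightedDistSum I w + 2 * ∑ i ∈ I, f i * potential I w i + weightedDistSum I f := by
  have := sum_mul_potential_comm I w f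
  simp only [weightedDistSum, potential_add, Pi.add_apply, add_mul, mul_add, sum_add_distrib]
  linarith

end WeightedPath

/-- `L + outwardShift a b` moves one leaf from `u_a` to `u_{a-1}` and one from `u_b` to `u_{b+1}`. -/
def outwardShift (a b i : ℤ) : ℤ :=
  (if i = a - 1 then 1 else 0) - (if i = a then 1 else 0) - (if i = b then 1 else 0) +
    (if i = b + 1 then 1 else 0)

section OutwardShift

variable {lo hi a b : ℤ}

lemma sum_outwardShift_mul (hlo : lo < a) (hab : a ≤ b) (hhi : b < hi) (g : ℤ → ℤ) :
    ∑ i ∈ Icc lo hi, outwardShift a b i * g i = g (a - 1) - g a - g b + g (b + 1) := by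
  simp only [outwardShift, add_mul, sub_mul, ite_mul, one_mul, zero_mul, sum_add_distrib,
    sum_sub_distrib, sum_ite_eq', mem_Icc]
  rw [if_pos (by omega), if_pos (by omega), if_pos (by omega), if_pos (by omega)]

lemma potential_outwardShift (hlo : lo < a) (hab : a ≤ b) (hhi : b < hi) (v : ℤ) :
    potential (Icc lo hi) (outwardShift a b) v = if a ≤ v ∧ v ≤ b then 2 else 0 := by
  rw [potential, sum_outwardShift_mul hlo hab hhi]
  split_ifs <;> simp only [abs_eq_max_neg] <;> omega

lemma sum_outwardShift_mul_potential (hlo : lo < a) (hab : a ≤ b) (hhi : b < hi) (w : ℤ → ℤ) :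
    ∑ i ∈ Icc lo hi, outwardShift a b i * potential (Icc lo hi) w i = 2 * ∑ i ∈ Icc a b, w i := by
  have hfilter : {i ∈ Icc lo hi | a ≤ i ∧ i ≤ b} = Icc a b := by
    ext i; simp only [mem_filter, mem_Icc]; omega
  simp_rw [sum_mul_potential_comm, potential_outwardShift hlo hab hhi, mul_ite, mul_zero]
  rw [← sum_filter, hfilter, ← sum_mul, mul_comm]

lemma weightedDistSum_add_outwardShift (hlo : lo < a) (hab : a ≤ b) (hhi : b < hi) (w : ℤ → ℤ) :
    weightedDistSum (Icc lo hi) (w + outwardShift a b) =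
      weightedDistSum (Icc lo hi) w + 4 * ∑ i ∈ Icc a b, w i - 4 := by
  have hshift : weightedDistSum (Icc lo hi) (outwardShift a b) = -4 := by
    rw [weightedDistSum, sum_outwardShift_mul hlo hab hhi]
    simp only [potential_outwardShift hlo hab hhi]
    rw [if_neg (by omega), if_pos (by omega), if_pos (by omega), if_neg (by omega)]
    norm_num
  rw [weightedDistSum_add, sum_outwardShift_mul_potential hlo hab hhi, hshift]
  ring

end OutwardShift

section Caterpillar

def catHeight (p : ℤ × ℤ) : ℕ := if p.1 = 0 then 0 else 1

def catDist (p q : ℤ × ℤ) : ℕ :=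
  if p = q then 0 else (p.2 - q.2).natAbs + catHeight p + catHeight q

lemma catDist_self (p : ℤ × ℤ) : catDist p p = 0 := if_pos rfl

lemma catDist_triangle (p q r : ℤ × ℤ) : catDist p q ≤ catDist p r + catDist r q := by
  unfold catDist
  by_cases hpr : p = r
  · subst hpr; simp
  by_cases hrq : r = q
  · subst hrq; simp
  simp only [if_neg hpr, if_neg hrq]
  split_ifs <;> omega

variable {d : ℤ} {L : ℤ → ℕ}

lemma mem_catVerts {p : ℤ × ℤ} :
    p ∈ catVerts d L ↔ -d ≤ p.2 ∧ p.2 ≤ d ∧ 0 ≤ p.1 ∧ p.1 ≤ L p.2 := by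
  simp only [catVerts, mem_biUnion, mem_image, mem_Icc]
  constructor
  · rintro ⟨i, ⟨h1, h2⟩, j, ⟨h3, h4⟩, rfl⟩; exact ⟨h1, h2, h3, h4⟩
  · rintro ⟨h1, h2, h3, h4⟩; exact ⟨p.2, ⟨h1, h2⟩, p.1, ⟨h3, h4⟩, rfl⟩

lemma caterpillar_adj_iff {u w : catVerts d L} :
    (caterpillar d L).Adj u w ↔ catDist u w = 1 := by
  obtain ⟨⟨j, i⟩, hu⟩ := u
  obtain ⟨⟨j', i'⟩, hw⟩ := w
  simp only [caterpillar, SimpleGraph.fromRel_adj, ne_eq, Subtype.mk.injEq, catDist, catHeight,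
    Prod.mk.injEq]
  split_ifs <;> grind

lemma exists_adj_catDist_eq_succ {u v : catVerts d L} (huv : u ≠ v) :
    ∃ w : catVerts d L, catDist u w = 1 ∧ catDist u v = catDist w v + 1 := by
  obtain ⟨⟨j, i⟩, hu⟩ := u
  obtain ⟨⟨j', i'⟩, hv⟩ := v
  have hv' := mem_catVerts.1 hv
  rw [mem_catVerts] at hu
  simp only [ne_eq, Subtype.mk.injEq, Prod.mk.injEq] at huv
  suffices ∃ q ∈ catVerts d L, catDist (j, i) q = 1 ∧
      catDist (j, i) (j', i') = catDist q (j', i') + 1 by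
    obtain ⟨q, hq, h⟩ := this
    exact ⟨⟨q, hq⟩, h⟩
  have spine (k : ℤ) (h1 : -d ≤ k) (h2 : k ≤ d) : ((0 : ℤ), k) ∈ catVerts d L :=
    mem_catVerts.2 ⟨h1, h2, le_rfl, Int.natCast_nonneg _⟩
  by_cases hj : j = 0
  · subst hj
    rcases lt_trichotomy i i' with h | rfl | h
    · refine ⟨(0, i + 1), spine _ (by omega) (by omega), ?_⟩
      simp only [catDist, catHeight, Prod.mk.injEq]; split_ifs <;> omega
    · refine ⟨(j', i), hv, ?_⟩
      simp only [catDist, catHeight, Prod.mk.injEq]; split_ifs <;> omega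
    · refine ⟨(0, i - 1), spine _ (by omega) (by omega), ?_⟩
      simp only [catDist, catHeight, Prod.mk.injEq]; split_ifs <;> omega
  · refine ⟨(0, i), spine _ hu.1 hu.2.1, ?_⟩
    simp only [catDist, catHeight, Prod.mk.injEq]; split_ifs <;> omega

lemma caterpillar_dist (u v : catVerts d L) : (caterpillar d L).dist u v = catDist u v :=
  SimpleGraph.dist_eq_of_descent (fun u v : catVerts d L => catDist u v) (fun _ => catDist_self _)
    (fun u w v h => (catDist_triangle u v w).trans (by rw [caterpillar_adj_iff.1 h, add_comm]))
    (fun _ _ huv => by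
      obtain ⟨w, huw, hw⟩ := exists_adj_catDist_eq_succ huv
      exact ⟨w, caterpillar_adj_iff.2 huw, hw⟩) u v

lemma sum_catVerts {M : Type*} [AddCommMonoid M] (F : ℤ × ℤ → M) :
    ∑ p ∈ catVerts d L, F p = ∑ i ∈ Icc (-d) d, ∑ j ∈ Icc 0 (L i : ℤ), F (j, i) := by
  rw [catVerts, sum_biUnion]
  · exact sum_congr rfl fun i _ => sum_image fun j _ j' _ h => (Prod.ext_iff.1 h).1
  · intro i _ i' _ hne
    simp only [Function.onFun, disjoint_left, mem_image]
    rintro _ ⟨j, _, rfl⟩ ⟨j', _, h⟩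
    exact hne (congrArg Prod.snd h).symm

lemma sum_catVerts_snd (g : ℤ → ℤ) :
    ∑ p ∈ catVerts d L, g p.2 = ∑ i ∈ Icc (-d) d, ((L i : ℤ) + 1) * g i := by
  rw [sum_catVerts]
  refine sum_congr rfl fun i _ => ?_
  simp only [sum_const, nsmul_eq_mul, Int.card_Icc_of_le (a := 0) (b := L i) (by omega),
    sub_zero]

lemma sum_catVerts_catHeight :
    ∑ p ∈ catVerts d L, (catHeight p : ℤ) = ∑ i ∈ Icc (-d) d, (L i : ℤ) := by
  rw [sum_catVerts]
  refine sum_congr rfl fun i _ => ?_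
  have hleaf : ∀ j ∈ Ioc 0 (L i : ℤ), (catHeight (j, i) : ℤ) = 1 := fun j hj => by
    simp [catHeight, (mem_Ioc.1 hj).1.ne']
  rw [Icc_eq_cons_Ioc (by omega), sum_cons, sum_congr rfl hleaf]
  simp [catHeight]

lemma sum_sum_catDist :
    ∑ p ∈ catVerts d L, ∑ q ∈ catVerts d L, (catDist p q : ℤ) =
      weightedDistSum (Icc (-d) d) (fun i => L i + 1) +
        2 * (∑ i ∈ Icc (-d) d, (L i : ℤ)) * (∑ i ∈ Icc (-d) d, ((L i : ℤ) + 1) - 1) := by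
  have hsplit (p q : ℤ × ℤ) : (catDist p q : ℤ) = |p.2 - q.2| + (catHeight p + catHeight q) -
      if p = q then 2 * (catHeight p : ℤ) else 0 := by
    unfold catDist
    split_ifs with h
    · subst h; simp only [Nat.cast_zero, sub_self, abs_zero, zero_add]; ring
    · push_cast; ring
  have hpath : ∑ p ∈ catVerts d L, ∑ q ∈ catVerts d L, |p.2 - q.2| =
      weightedDistSum (Icc (-d) d) (fun i => L i + 1) := by
    rw [sum_congr rfl fun p _ => sum_catVerts_snd fun j => |p.2 - j|]
    exact sum_catVerts_snd (potential (Icc (-d) d) fun i => (L i : ℤ) + 1)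
  have hcard : (#(catVerts d L) : ℤ) = ∑ i ∈ Icc (-d) d, ((L i : ℤ) + 1) := by
    simpa using sum_catVerts_snd (d := d) (L := L) (fun _ => 1)
  have hdiag : ∑ p ∈ catVerts d L, ∑ q ∈ catVerts d L,
      (if p = q then 2 * (catHeight p : ℤ) else 0) = 2 * ∑ p ∈ catVerts d L, (catHeight p : ℤ) := by
    rw [mul_sum]
    exact sum_congr rfl fun p hp => by rw [sum_ite_eq, if_pos hp]
  rw [← hcard, ← sum_catVerts_catHeight]
  simp only [hsplit, sum_sub_distrib, sum_add_distrib, hpath, hdiag, sum_const, nsmul_eq_mul]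
  rw [← mul_sum]
  ring

theorem two_mul_wiener_caterpillar (d : ℤ) (L : ℤ → ℕ) :
    2 * (wiener (caterpillar d L) : ℤ) =
      weightedDistSum (Icc (-d) d) (fun i => L i + 1) +
        2 * (∑ i ∈ Icc (-d) d, (L i : ℤ)) * (∑ i ∈ Icc (-d) d, ((L i : ℤ) + 1) - 1) := by
  have h := congrArg (Nat.cast : ℕ → ℤ) (two_mul_wiener (caterpillar d L))
  push_cast at h
  rw [h, ← sum_sum_catDist, ← sum_coe_sort (catVerts d L)]
  simp_rw [caterpillar_dist, ← sum_coe_sort (catVerts d L) (fun q => (catDist _ q : ℤ))]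

theorem two_mul_wiener_caterpillar_of_outwardShift {d a b : ℤ} {L L' : ℤ → ℕ}
    (ha : -d < a) (hab : a ≤ b) (hb : b < d) (hL : ∀ i, (L' i : ℤ) = L i + outwardShift a b i) :
    2 * (wiener (caterpillar d L') : ℤ) =
      2 * wiener (caterpillar d L) + 4 * ∑ i ∈ Icc a b, ((L i : ℤ) + 1) - 4 := by
  have hw : (fun i => (L' i : ℤ) + 1) = (fun i => (L i : ℤ) + 1) + outwardShift a b := by
    funext i; simp only [hL, Pi.add_apply]; ring
  have hsum : ∑ i ∈ Icc (-d) d, (L' i : ℤ) = ∑ i ∈ Icc (-d) d, (L i : ℤ) := by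
    have h0 := sum_outwardShift_mul ha hab hb 1
    simp only [Pi.one_apply, mul_one] at h0
    simp only [hL, sum_add_distrib, h0]
    ring
  rw [two_mul_wiener_caterpillar, two_mul_wiener_caterpillar]
  simp only [sum_add_distrib, hsum]
  rw [hw, weightedDistSum_add_outwardShift ha hab hb, sum_add_distrib]
  ring

end Caterpillar

lemma B1L_sub_one {m d x : ℤ} (hxd : x ≤ d) (i : ℤ) :
    (B1L m d (x - 1) i : ℤ) = B1L m d x i + outwardShift (-d - 1 + x) (d + 1 - x) i := by
  simp only [B1L, outwardShift]
  push_cast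
  split_ifs <;> omega

lemma sum_B1L_Icc {m d x : ℤ} (hxd : x ≤ d) (hk : 0 ≤ (m - 2 * d - 4) / 2)
    (hkx : (m - 2 * d - 4) / 2 ≤ d + 1 - x) :
    ∑ i ∈ Icc (-d - 1 + x) (d + 1 - x), (B1L m d x i : ℤ) = 2 * ((m - 2 * d - 4) / 2) + 3 := by
  have hends : {i ∈ Icc (-d - 1 + x) (d + 1 - x) | i = -d - 1 + x ∨ i = d + 1 - x} =
      {-d - 1 + x, d + 1 - x} := by
    ext i; simp only [mem_filter, mem_Icc, mem_insert, mem_singleton]; omega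
  have hmid : {i ∈ Icc (-d - 1 + x) (d + 1 - x) | |i| ≤ (m - 2 * d - 4) / 2} =
      Icc (-((m - 2 * d - 4) / 2)) ((m - 2 * d - 4) / 2) := by
    ext i; simp only [mem_filter, mem_Icc, abs_le]; omega
  simp only [B1L]
  push_cast
  rw [sum_add_distrib, sum_boole, sum_boole, hends, hmid, card_pair (by omega),
    Int.card_Icc_of_le _ _ (by omega)]
  push_cast
  ring

def G1L (n d x s : ℤ) (i : ℤ) : ℕ :=
  B1L (n - 2) d x i + (if i = s then 1 else 0) + (if i = d then 1 else 0)

lemma wiener_G1 (n d x s : ℤ) : wiener (G1 n d x s) = wiener (caterpillar d (G1L n d x s)) := rfl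

lemma G1L_sub_one {n d x s : ℤ} (hxd : x ≤ d) (i : ℤ) :
    (G1L n d (x - 1) s i : ℤ) = G1L n d x s i + outwardShift (-d - 1 + x) (d + 1 - x) i := by
  simp only [G1L]
  push_cast
  rw [B1L_sub_one hxd]
  ring

lemma sum_G1L_Icc {n d x s : ℤ} (hn : Even n) (hx : 2 ≤ x) (hd : 2 * d + 6 ≤ n)
    (hnx : n + 2 * x ≤ 4 * d + 6) (hs : -d - 1 + x ≤ s ∧ s ≤ d + 1 - x) :
    ∑ i ∈ Icc (-d - 1 + x) (d + 1 - x), ((G1L n d x s i : ℤ) + 1) = n - 2 * x + 1 := by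
  obtain ⟨c, rfl⟩ := hn
  simp only [G1L]
  push_cast
  rw [sum_add_distrib, sum_add_distrib, sum_add_distrib,
    sum_B1L_Icc (by omega) (by omega) (by omega), sum_ite_eq', sum_ite_eq', sum_const,
    Int.card_Icc, if_pos (mem_Icc.2 hs), if_neg (by simp only [mem_Icc]; omega)]
  simp only [nsmul_eq_mul, mul_one]
  omega

theorem wiener_G1_stepX_general (n d x s : ℤ) (hne : Even n)
    (hd2 : 2 * d ≤ n - 10)
    (hx1 : 2 ≤ x) (hx2 : 2 * x ≤ 4 + 4 * d - (n - 2))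
    (hs : s ∈ ({-1, 0, 1, 2} : Set ℤ)) :
    (wiener (G1 n d (x - 1) s) : ℤ) - (wiener (G1 n d x s) : ℤ) = 2 * n - 4 * x ∧
    (4 : ℤ) ∣ (2 * n - 4 * x) := by
  have hs' : -1 ≤ s ∧ s ≤ 2 := by
    simp only [Set.mem_insert_iff, Set.mem_singleton_iff] at hs
    omega
  have hstep := two_mul_wiener_caterpillar_of_outwardShift (d := d)
    (hL := G1L_sub_one (n := n) (d := d) (x := x) (s := s) (by omega))
    (by omega) (by omega) (by omega)
  rw [sum_G1L_Icc hne hx1 (by omega) (by omega) (by omega)] at hstep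
  rw [wiener_G1, wiener_G1]
  obtain ⟨c, rfl⟩ := hne
  exact ⟨by omega, c - x, by ring⟩

/-- `W(G₁(n,d,x−1,s)) − W(G₁(n,d,x,s)) = 2n − 4x`, divisible by 4. -/
theorem wiener_G1_stepX (n d x s : ℤ) (hne : Even n) (hn : 20 ≤ n)
    (hd1 : n - 4 ≤ 4 * d) (hd2 : 2 * d ≤ n - 10)
    (hx1 : 2 ≤ x) (hx2 : 2 * x ≤ 4 + 4 * d - (n - 2))
    (hs : s ∈ ({-1, 0, 1, 2} : Set ℤ)) :
    (wiener (G1 n d (x - 1) s) : ℤ) - (wiener (G1 n d x s) : ℤ) = 2 * n - 4 * x ∧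
    (4 : ℤ) ∣ (2 * n - 4 * x) :=
  wiener_G1_stepX_general n d x s hne hd2 hx1 hx2 hs
end
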